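/- Let R be a commutative ring with automorphism σ and let # be the anti-involution of the twisted Laurent polynomial ring R[Λ, Λ^{-1}; σ] determined by a^# = a for a ∈ R and Λ^# = Λ^{-1}. For elements a_1, …, a_N ∈ R define 𝓐 := (Σ_{i=1}^{N} (a_iΛ^i - Λ^{-i}a_i))·(Λ - Λ^{-1}). Then 𝓐^# = (Λ - Λ^{-1})·𝓐·(Λ - Λ^{-1})^{-1}, i.e. (Λ - Λ^{-1})^{-1}·𝓐^#·(Λ - Λ^{-1}) = 𝓐, as an identity in the localization of R[Λ,Λ^{-1};σ] at Λ - Λ^{-1} (equivalently, 𝓐^#·(Λ-Λ^{-1}) = (Λ-Λ^{-1})·𝓐). -/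

import Mathlib

namespace ExtendedDToda
/-- The twisted Laurent polynomial ring `R[Λ, Λ^{-1}; σ]`: finite sums
`Σ_i a_i Λ^i` with the relation `Λ·a = σ(a)·Λ`. -/
structure TL (R : Type) [CommRing R] : Type where
  coeff : ℤ → R
  fin : (Function.support coeff).Finite
namespace TL
variable {R : Type} [CommRing R] (σ : RingAut R)
/-- The monomial `r·Λ^k`. -/
def single (k : ℤ) (r : R) : TL R :=
  ⟨fun n => if n = k then r else 0,
   Set.Finite.subset (Set.finite_singleton k) (by
     intro n hn
     rw [Function.mem_support] at hn
     by_contra h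
     exact hn (if_neg (by simpa [Set.mem_singleton_iff] using h)))⟩
/-- The constant `r·Λ^0`. -/
def cst (r : R) : TL R := single 0 r
/-- The monomial `Λ^k`. -/
def lam (k : ℤ) : TL R := single k 1
/-- The identity `1 = Λ^0`. -/
def one : TL R := lam 0
def zero : TL R :=
  ⟨fun _ => 0, Set.Finite.subset Set.finite_empty (by
    intro n hn
    rw [Function.mem_support] at hn
    exact absurd rfl hn)⟩
def tadd (P Q : TL R) : TL R :=
  ⟨fun n => P.coeff n + Q.coeff n,
   Set.Finite.subset (P.fin.union Q.fin) (by
     intro n hn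
     rw [Function.mem_support] at hn
     by_contra h
     simp only [Set.mem_union, Function.mem_support, not_or, not_not] at h
     exact hn (by rw [h.1, h.2, add_zero]))⟩
def tneg (P : TL R) : TL R :=
  ⟨fun n => -P.coeff n,
   Set.Finite.subset P.fin (by
     intro n hn
     rw [Function.mem_support] at hn
     rw [Function.mem_support]
     intro h
     exact hn (by rw [h, neg_zero]))⟩
def tsub (P Q : TL R) : TL R := tadd P (tneg Q)
/-- The product in `R[Λ, Λ^{-1}; σ]`, determined by `Λ^i·a = σ^i(a)·Λ^i`. -/
noncomputable def tmul (P Q : TL R) : TL R :=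
  ⟨fun n => ∑ᶠ i : ℤ, P.coeff i * (σ ^ i) (Q.coeff (n - i)),
   Set.Finite.subset (Set.Finite.image2 (· + ·) P.fin Q.fin) (by
     intro n hn
     rw [Function.mem_support] at hn
     by_contra hmem
     apply hn
     have h : ∀ i : ℤ, P.coeff i * (σ ^ i) (Q.coeff (n - i)) = 0 := by
       intro i
       by_cases hP : P.coeff i = 0
       · rw [hP, zero_mul]
       · have hQ : Q.coeff (n - i) = 0 := by
           by_contra hQ
           apply hmem
           have hmm : i + (n - i) = n := by ring
           rw [← hmm]
           exact Set.mem_image2_of_mem (Function.mem_support.mpr hP)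
             (Function.mem_support.mpr hQ)
         rw [hQ, map_zero, mul_zero]
     rw [finsum_congr h, finsum_zero])⟩
/-- The adjoint `#`, determined by `a^# = a` for `a ∈ R` and `Λ^# = Λ^{-1}`:
`(Σ_i a_i Λ^i)^# = Σ_i Λ^{-i} a_i = Σ_i σ^{-i}(a_i) Λ^{-i}`. -/
def tadj (P : TL R) : TL R :=
  ⟨fun n => (σ ^ n) (P.coeff (-n)),
   Set.Finite.subset (P.fin.image (fun m => -m)) (by
     intro n hn
     rw [Function.mem_support] at hn
     refine ⟨-n, ?_, by simp⟩
     rw [Function.mem_support]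
     intro h
     exact hn (by rw [h, map_zero]))⟩
/-- Finite sums `Σ_{i=1}^{N} f i`. -/
noncomputable def sumTL (f : ℕ → TL R) : ℕ → TL R
  | 0 => zero
  | (k + 1) => tadd (sumTL f k) (f (k + 1))
end TL
end ExtendedDToda

/-!
Both factors of `𝓐 = S·D` are skew-adjoint: `D = Λ - Λ^#`, and `S` is a sum of terms
`X - X^#` with `X = a_i Λ^i`. Since `#` reverses products, `𝓐^# = D^# S^# = (-D)(-S) = D S`,
hence `𝓐^# D = D S D = D 𝓐` by associativity. The substance lies in associativity and in
`(PQ)^# = Q^# P^#`, both checked on coefficients.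
-/

namespace ExtendedDToda.TL

variable {R : Type} [CommRing R] (σ : RingAut R)

@[ext]
theorem ext {P Q : TL R} (h : ∀ n, P.coeff n = Q.coeff n) : P = Q := by
  cases P; cases Q
  congr
  exact funext h

@[simp] theorem coeff_zero (n : ℤ) : (zero : TL R).coeff n = 0 := rfl
@[simp] theorem coeff_tadd (P Q : TL R) (n : ℤ) : (tadd P Q).coeff n = P.coeff n + Q.coeff n := rfl
@[simp] theorem coeff_tneg (P : TL R) (n : ℤ) : (tneg P).coeff n = -P.coeff n := rfl
@[simp] theorem coeff_tsub (P Q : TL R) (n : ℤ) : (tsub P Q).coeff n = P.coeff n - Q.coeff n :=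
  (sub_eq_add_neg _ _).symm
@[simp] theorem coeff_single (k : ℤ) (r : R) (n : ℤ) :
    (single k r).coeff n = if n = k then r else 0 := rfl
@[simp] theorem coeff_tadj (P : TL R) (n : ℤ) : (tadj σ P).coeff n = (σ ^ n) (P.coeff (-n)) := rfl

theorem coeff_tmul (P Q : TL R) (n : ℤ) :
    (tmul σ P Q).coeff n = ∑ᶠ i, P.coeff i * (σ ^ i) (Q.coeff (n - i)) := rfl

theorem zpow_apply_zpow_apply (i j : ℤ) (r : R) : (σ ^ i) ((σ ^ j) r) = (σ ^ (i + j)) r := by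
  rw [zpow_add]; rfl

theorem coeff_tmul_eq_sum_left (P Q : TL R) (n : ℤ) :
    (tmul σ P Q).coeff n = ∑ j ∈ P.fin.toFinset, P.coeff j * (σ ^ j) (Q.coeff (n - j)) :=
  finsum_eq_finsetSum_of_support_subset _ fun _ hj => by
    simpa using left_ne_zero_of_mul hj

theorem coeff_tmul_eq_sum_right (P Q : TL R) (n : ℤ) :
    (tmul σ P Q).coeff n = ∑ k ∈ Q.fin.toFinset, P.coeff (n - k) * (σ ^ (n - k)) (Q.coeff k) := by
  rw [coeff_tmul, ← finsum_comp_equiv (Equiv.subLeft n)]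
  simp only [Equiv.subLeft_apply, sub_sub_cancel]
  exact finsum_eq_finsetSum_of_support_subset _ fun _ hk => by
    simpa using right_ne_zero_of_mul hk

theorem tmul_assoc (P Q S : TL R) : tmul σ (tmul σ P Q) S = tmul σ P (tmul σ Q S) := by
  ext n
  -- Expand each side on its non-product factor: both become double sums over `supp P × supp S`.
  rw [coeff_tmul_eq_sum_right σ (tmul σ P Q) S, coeff_tmul_eq_sum_left σ P (tmul σ Q S)]
  simp_rw [coeff_tmul_eq_sum_left σ P Q, coeff_tmul_eq_sum_right σ Q S, map_sum,
    Finset.sum_mul, Finset.mul_sum]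
  rw [Finset.sum_comm]
  refine Finset.sum_congr rfl fun j _ => Finset.sum_congr rfl fun k _ => ?_
  rw [map_mul, zpow_apply_zpow_apply, mul_assoc]
  ring_nf

theorem tadj_tmul (P Q : TL R) : tadj σ (tmul σ P Q) = tmul σ (tadj σ Q) (tadj σ P) := by
  ext n
  have reindexed : (tmul σ (tadj σ Q) (tadj σ P)).coeff n
      = ∑ᶠ j, (σ ^ (n + j)) (Q.coeff (-n - j)) * (σ ^ n) (P.coeff j) := by
    rw [coeff_tmul, ← finsum_comp_equiv (Equiv.addLeft n)]
    refine finsum_congr fun j => ?_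
    simp only [Equiv.coe_addLeft, coeff_tadj, zpow_apply_zpow_apply]
    congr 3 <;> ring
  rw [reindexed, finsum_eq_finsetSum_of_support_subset (s := P.fin.toFinset) _ fun _ hj => by
    simpa using right_ne_zero_of_mul hj, coeff_tadj, coeff_tmul_eq_sum_left, map_sum]
  refine Finset.sum_congr rfl fun j _ => ?_
  rw [map_mul, zpow_apply_zpow_apply, mul_comm, sub_eq_add_neg]

theorem tadj_tadd (P Q : TL R) : tadj σ (tadd P Q) = tadd (tadj σ P) (tadj σ Q) := by
  ext n
  simp

theorem tmul_tneg_tneg (P Q : TL R) : tmul σ (tneg P) (tneg Q) = tmul σ P Q := by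
  ext n
  simp only [coeff_tmul, coeff_tneg, map_neg, neg_mul_neg]

theorem tadj_cst (r : R) : tadj σ (cst r) = cst r := by
  ext n
  simp only [cst, coeff_tadj, coeff_single, neg_eq_zero]
  split_ifs with h
  · simp [h]
  · exact map_zero _

theorem tadj_lam (k : ℤ) : tadj σ (lam k : TL R) = lam (-k) := by
  ext n
  simp only [lam, coeff_tadj, coeff_single, neg_eq_iff_eq_neg]
  split_ifs <;> simp

def IsSkewAdjoint (P : TL R) : Prop := tadj σ P = tneg P

theorem isSkewAdjoint_tsub_tadj (P : TL R) : IsSkewAdjoint σ (tsub P (tadj σ P)) := by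
  ext n
  simp

theorem isSkewAdjoint_sumTL {f : ℕ → TL R} (hf : ∀ i, IsSkewAdjoint σ (f i)) (N : ℕ) :
    IsSkewAdjoint σ (sumTL f N) := by
  induction N with
  | zero =>
    ext n
    simp [sumTL]
  | succ k ih =>
    rw [IsSkewAdjoint, sumTL, tadj_tadd, ih, hf]
    ext n
    simp [add_comm]

theorem IsSkewAdjoint.tadj_tmul {P Q : TL R} (hP : IsSkewAdjoint σ P) (hQ : IsSkewAdjoint σ Q) :
    tadj σ (tmul σ P Q) = tmul σ Q P := by
  rw [TL.tadj_tmul, hP, hQ, tmul_tneg_tneg]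

end ExtendedDToda.TL

open ExtendedDToda ExtendedDToda.TL in
/-- for `a_1, …, a_N ∈ R`, the operator
`𝓐 := (Σ_{i=1}^{N} (a_iΛ^i - Λ^{-i}a_i))·(Λ - Λ^{-1})` satisfies
`𝓐^#·(Λ - Λ^{-1}) = (Λ - Λ^{-1})·𝓐`, i.e.
`𝓐^# = (Λ-Λ^{-1})·𝓐·(Λ-Λ^{-1})^{-1}` in the localization at `Λ - Λ^{-1}`. -/
theorem statement16 {R : Type} [CommRing R] (σ : RingAut R) (N : ℕ) (a : ℕ → R) :
    tmul σ
      (tadj σ (tmul σ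
        (sumTL (fun i => tsub (tmul σ (cst (a i)) (lam (i : ℤ)))
          (tmul σ (lam (-(i : ℤ))) (cst (a i)))) N)
        (tsub (lam 1) (lam (-1)))))
      (tsub (lam 1) (lam (-1)))
    = tmul σ (tsub (lam 1) (lam (-1)))
        (tmul σ
          (sumTL (fun i => tsub (tmul σ (cst (a i)) (lam (i : ℤ)))
            (tmul σ (lam (-(i : ℤ))) (cst (a i)))) N)
          (tsub (lam 1) (lam (-1)))) := by
  have hD : IsSkewAdjoint σ (tsub (lam 1) (lam (-1)) : TL R) := by
    simpa only [tadj_lam] using isSkewAdjoint_tsub_tadj σ (lam 1)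
  have hS := isSkewAdjoint_sumTL σ (fun i => by
    simpa only [TL.tadj_tmul, tadj_lam, tadj_cst] using
      isSkewAdjoint_tsub_tadj σ (tmul σ (cst (a i)) (lam (i : ℤ)))) N
  rw [hS.tadj_tmul σ hD, tmul_assoc]
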